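/- For every integer n ≥ 0 and every real number x, Σ_{k=0}^{n} L_{m,r}[n,k]_q · ∏_{i=0}^{k−1} q^{−im}(x − [im]_q) = ∏_{i=0}^{n−1} (q^{2r+im} x + [2r+im]_q). (With x = [t]_q this is the horizontal generating function Σ_{k=0}^{n} L_{m,r}[n,k]_q [t|m]_{k,q} = [t+2r|m]_{\overline{n},q}, where [t|m]_{k,q} = ∏_{i=0}^{k−1}[t−im]_q is the q-falling factorial and [t+2r|m]_{\overline{n},q} = ∏_{i=0}^{n−1}[t+2r+im]_q is the q-rising factorial.) -/

import Mathlib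

open Finset

/-- The `q`-integer `[s]_q = (q^s - 1)/(q - 1)` for an integer `s`. -/
noncomputable def qint (q : ℝ) (s : ℤ) : ℝ := (q ^ s - 1) / (q - 1)

/-- The `(q,r)`-Whitney-Lah numbers `L_{m,r}[n,k]_q`, defined by `L[0,0] = 1`,
`L[n,k] = 0` for `k > n`, and the triangular recurrence
`L[n,k] = q^(2r+m(k-1)+m(n-1)) L[n-1,k-1] + [2r+km+(n-1)m]_q L[n-1,k]`. -/
noncomputable def qLah (q : ℝ) (m r : ℕ) : ℕ → ℕ → ℝ
  | 0, 0 => 1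
  | 0, _ + 1 => 0
  | n + 1, 0 => qint q (2 * r + n * m) * qLah q m r n 0
  | n + 1, k + 1 =>
      q ^ (2 * r + m * k + m * n) * qLah q m r n k
        + qint q (2 * r + (k + 1) * m + n * m) * qLah q m r n (k + 1)

/-!
Write `P_k(x) = ∏_{i<k} q^{-im}(x - [im]_q)`. Since `[a + km]_q = q^a [km]_q + [a]_q`,
multiplying by a linear factor acts on this basis as
`(q^a x + [a]_q) P_k = q^{a+km} P_{k+1} + [a+km]_q P_k`.
For `a = 2r + nm` this is the recurrence of `L[n+1, ·]`, so the identity follows by induction on `n`.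
-/

/-- With `x = [t]_q` this is the `q`-falling factorial `∏_{i<k} [t - im]_q`. -/
noncomputable def qFallingFactorial (q : ℝ) (m : ℕ) (x : ℝ) (k : ℕ) : ℝ :=
  ∏ i ∈ range k, (q ^ (-((m : ℤ) * i)) * (x - qint q ((m : ℤ) * i)))

lemma qFallingFactorial_succ (q : ℝ) (m : ℕ) (x : ℝ) (k : ℕ) :
    qFallingFactorial q m x (k + 1) =
      qFallingFactorial q m x k * (q ^ (-((m : ℤ) * k)) * (x - qint q ((m : ℤ) * k))) :=
  prod_range_succ _ _

lemma qint_add {q : ℝ} (hq0 : q ≠ 0) (hq1 : q ≠ 1) (a b : ℤ) :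
    qint q (a + b) = q ^ a * qint q b + qint q a := by
  have : q - 1 ≠ 0 := sub_ne_zero.mpr hq1
  simp only [qint, zpow_add₀ hq0]
  field_simp
  ring

lemma linear_mul_qFallingFactorial {q : ℝ} (hq0 : q ≠ 0) (hq1 : q ≠ 1) (m a k : ℕ) (x : ℝ) :
    (q ^ a * x + qint q a) * qFallingFactorial q m x k =
      q ^ (a + m * k) * qFallingFactorial q m x (k + 1)
        + qint q (a + m * k : ℕ) * qFallingFactorial q m x k := by
  have hpow : q ^ (a + m * k) * q ^ (-((m : ℤ) * k)) = q ^ a := by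
    rw [← zpow_natCast, ← zpow_add₀ hq0, ← zpow_natCast]
    push_cast
    ring_nf
  have hint : qint q (a + m * k : ℕ) = q ^ a * qint q ((m : ℤ) * k) + qint q a := by
    rw [← zpow_natCast, ← qint_add hq0 hq1]
    push_cast
    rfl
  rw [qFallingFactorial_succ, hint]
  linear_combination
    -(qFallingFactorial q m x k * (x - qint q ((m : ℤ) * k))) * hpow

lemma qLah_eq_zero_of_lt (q : ℝ) (m r : ℕ) : ∀ {n k : ℕ}, n < k → qLah q m r n k = 0
  | 0, _ + 1, _ => rfl
  | n + 1, k + 1, h => by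
    simp only [qLah, qLah_eq_zero_of_lt q m r (n := n) (k := k) (by omega),
      qLah_eq_zero_of_lt q m r (n := n) (k := k + 1) (by omega), mul_zero, add_zero]

lemma sum_qLah_succ_mul (q : ℝ) (m r n : ℕ) (f : ℕ → ℝ) :
    ∑ k ∈ range (n + 2), qLah q m r (n + 1) k * f k =
      ∑ k ∈ range (n + 1), qLah q m r n k *
        (q ^ (2 * r + n * m + m * k) * f (k + 1) + qint q (2 * r + n * m + m * k : ℕ) * f k) := by
  let g : ℕ → ℝ := fun k => qint q (2 * r + n * m + m * k : ℕ) * qLah q m r n k * f k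
  have hg : ∑ k ∈ range (n + 2), g k = ∑ k ∈ range (n + 1), g k := by
    rw [sum_range_succ, add_eq_left]
    simp only [g, qLah_eq_zero_of_lt q m r (Nat.lt_succ_self n), mul_zero, zero_mul]
  calc ∑ k ∈ range (n + 2), qLah q m r (n + 1) k * f k
      = ∑ k ∈ range (n + 1), qLah q m r (n + 1) (k + 1) * f (k + 1)
          + qLah q m r (n + 1) 0 * f 0 := sum_range_succ' _ _
    _ = ∑ k ∈ range (n + 1), q ^ (2 * r + n * m + m * k) * qLah q m r n k * f (k + 1)
          + (∑ k ∈ range (n + 1), g (k + 1) + g 0) := by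
        simp only [qLah, g, add_mul, sum_add_distrib, add_assoc]
        congr 1
        · refine sum_congr rfl fun k _ => ?_
          ring_nf
        · congr 1
          refine sum_congr rfl fun k _ => ?_
          push_cast
          ring_nf
    _ = _ := by
        rw [← sum_range_succ', hg, ← sum_add_distrib]
        refine sum_congr rfl fun k _ => ?_
        ring

theorem qLah_horizontal_generating_function_general (q : ℝ) (hq : 0 < q) (hq1 : q ≠ 1) (m r : ℕ)
    (n : ℕ) (x : ℝ) :
    ∑ k ∈ Finset.range (n + 1),
        qLah q m r n k * ∏ i ∈ Finset.range k, (q ^ (-((m : ℤ) * i)) * (x - qint q ((m : ℤ) * i))) =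
      ∏ i ∈ Finset.range n, (q ^ (2 * r + i * m) * x + qint q (2 * r + i * m)) := by
  change ∑ k ∈ range (n + 1), qLah q m r n k * qFallingFactorial q m x k = _
  induction n with
  | zero => simp [qLah, qFallingFactorial]
  | succ n ih =>
    rw [sum_qLah_succ_mul, prod_range_succ, ← ih, sum_mul]
    refine sum_congr rfl fun k _ => ?_
    have h := linear_mul_qFallingFactorial hq.ne' hq1 m (2 * r + n * m) k x
    push_cast at h ⊢
    rw [mul_assoc, mul_comm (qFallingFactorial q m x k), h]

theorem qLah_horizontal_generating_function (q : ℝ) (hq : 0 < q) (hq1 : q ≠ 1) (m r : ℕ) (hm : 0 < m) (hr : 0 < r)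
    (n : ℕ) (x : ℝ) :
    ∑ k ∈ Finset.range (n + 1),
        qLah q m r n k * ∏ i ∈ Finset.range k, (q ^ (-((m : ℤ) * i)) * (x - qint q ((m : ℤ) * i))) =
      ∏ i ∈ Finset.range n, (q ^ (2 * r + i * m) * x + qint q (2 * r + i * m)) :=
  qLah_horizontal_generating_function_general q hq hq1 m r n x
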